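/- Let S be a real symmetric positive definite p×p matrix with eigenvalues λ_1 ≥ λ_2 ≥ … ≥ λ_p > 0 and a corresponding orthonormal family of eigenvectors u_1,…,u_p, and let r be an integer with 1 ≤ r < p. Define σ̂² = (1/(p−r))·Σ_{i=r+1}^p λ_i and Σ̂ = σ̂²·I_p + Σ_{i=1}^r (λ_i − σ̂²)·u_i u_iᵀ. Then for every σ > 0 and every real symmetric positive semidefinite p×p matrix H with rank(H) ≤ r, writing Σ = σ²·I_p + H, one has log det(Σ) + tr(S Σ^{-1}) ≥ log det(Σ̂) + tr(S Σ̂^{-1}). -/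

import Mathlib

open Matrix

namespace ET

variable {p : ℕ}

lemma row_mul_transpose (v : Fin p → Fin p → ℝ)
    (hv : ∀ i j, v i ⬝ᵥ v j = if i = j then 1 else 0) :
    (Matrix.of v) * (Matrix.of v)ᵀ = 1 := by
  ext i j
  simp [Matrix.mul_apply, Matrix.one_apply, ← hv i j, dotProduct]

lemma transpose_mul_row (v : Fin p → Fin p → ℝ)
    (hv : ∀ i j, v i ⬝ᵥ v j = if i = j then 1 else 0) :
    (Matrix.of v)ᵀ * (Matrix.of v) = 1 :=
  mul_eq_one_comm.mp (row_mul_transpose v hv)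

lemma sum_form (v : Fin p → Fin p → ℝ) (c : Fin p → ℝ) :
    (Matrix.of v)ᵀ * diagonal c * (Matrix.of v)
      = ∑ i, c i • vecMulVec (v i) (v i) := by
  ext j k
  simp [Matrix.mul_apply, diagonal, vecMulVec, Finset.sum_apply,
    Finset.sum_ite_eq, Matrix.sum_apply]
  congr 1; ext i; ring

lemma det_form (v : Fin p → Fin p → ℝ)
    (hv : ∀ i j, v i ⬝ᵥ v j = if i = j then 1 else 0) (d : Fin p → ℝ) :
    ((Matrix.of v)ᵀ * diagonal d * (Matrix.of v)).det = ∏ i, d i := by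
  have h1 : (Matrix.of v).det * (Matrix.of v)ᵀ.det = 1 := by
    rw [← Matrix.det_mul, row_mul_transpose v hv, Matrix.det_one]
  calc ((Matrix.of v)ᵀ * diagonal d * (Matrix.of v)).det
      = (Matrix.of v)ᵀ.det * (diagonal d).det * (Matrix.of v).det := by
        rw [Matrix.det_mul, Matrix.det_mul]
    _ = (Matrix.of v).det * (Matrix.of v)ᵀ.det * (diagonal d).det := by ring
    _ = ∏ i, d i := by rw [h1, one_mul, Matrix.det_diagonal]

lemma inv_form (v : Fin p → Fin p → ℝ)
    (hv : ∀ i j, v i ⬝ᵥ v j = if i = j then 1 else 0) (d : Fin p → ℝ)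
    (hd : ∀ i, d i ≠ 0) :
    ((Matrix.of v)ᵀ * diagonal d * (Matrix.of v))⁻¹
      = (Matrix.of v)ᵀ * diagonal (fun i => (d i)⁻¹) * (Matrix.of v) := by
  apply Matrix.inv_eq_right_inv
  have h : (Matrix.of v) * ((Matrix.of v)ᵀ * diagonal (fun i => (d i)⁻¹) * (Matrix.of v))
      = diagonal (fun i => (d i)⁻¹) * (Matrix.of v) := by
    rw [← Matrix.mul_assoc, ← Matrix.mul_assoc, row_mul_transpose v hv, Matrix.one_mul]
  rw [Matrix.mul_assoc ((Matrix.of v)ᵀ * diagonal d), h, ← Matrix.mul_assoc,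
    Matrix.mul_assoc (Matrix.of v)ᵀ, Matrix.diagonal_mul_diagonal]
  have h2 : (fun i => d i * (d i)⁻¹) = fun _ => (1:ℝ) := by
    funext i; exact mul_inv_cancel₀ (hd i)
  rw [h2, Matrix.diagonal_one, Matrix.mul_one, transpose_mul_row v hv]

lemma trace_diag (M : Matrix (Fin p) (Fin p) ℝ) (d : Fin p → ℝ) :
    (M * diagonal d).trace = ∑ i, d i * M i i := by
  simp only [Matrix.trace, Matrix.diag_apply, Matrix.mul_apply, Matrix.diagonal_apply,
    mul_ite, mul_zero, Finset.sum_ite_eq', Finset.mem_univ, if_true]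
  exact Finset.sum_congr rfl fun i _ => mul_comm _ _

lemma trace_form (S : Matrix (Fin p) (Fin p) ℝ) (v : Fin p → Fin p → ℝ)
    (d : Fin p → ℝ) :
    (S * ((Matrix.of v)ᵀ * diagonal d * (Matrix.of v))).trace
      = ∑ i, d i * (v i ⬝ᵥ S.mulVec (v i)) := by
  have h : S * ((Matrix.of v)ᵀ * diagonal d * (Matrix.of v))
      = (S * (Matrix.of v)ᵀ * diagonal d) * (Matrix.of v) := by
    simp only [Matrix.mul_assoc]
  rw [h, Matrix.trace_mul_comm, ← Matrix.mul_assoc, ← Matrix.mul_assoc, trace_diag]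
  refine Finset.sum_congr rfl fun i _ => ?_
  congr 1
  simp only [Matrix.mul_apply, Matrix.transpose_apply, Matrix.of_apply, dotProduct,
    Matrix.mulVec, Finset.sum_mul]
  rw [Finset.sum_comm]
  refine Finset.sum_congr rfl fun k _ => ?_
  rw [Finset.mul_sum]
  refine Finset.sum_congr rfl fun m _ => ?_
  ring

lemma S_eq (S : Matrix (Fin p) (Fin p) ℝ) (hsym : Sᵀ = S)
    (l : Fin p → ℝ) (u : Fin p → Fin p → ℝ)
    (horth : ∀ i j, u i ⬝ᵥ u j = if i = j then 1 else 0)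
    (heig : ∀ i, S.mulVec (u i) = l i • u i) :
    S = (Matrix.of u)ᵀ * diagonal l * (Matrix.of u) := by
  have h1 : (Matrix.of u) * S = diagonal l * (Matrix.of u) := by
    ext i j
    have h2 := congrFun (heig i) j
    simp only [Matrix.mulVec, dotProduct, Pi.smul_apply, smul_eq_mul] at h2
    simp only [Matrix.mul_apply, Matrix.of_apply, Matrix.diagonal_apply, ite_mul, zero_mul,
      Finset.sum_ite_eq, Finset.mem_univ, if_true]
    rw [← h2]
    refine Finset.sum_congr rfl fun k _ => ?_
    have h3 := congrFun (congrFun hsym k) j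
    simp only [Matrix.transpose_apply] at h3
    rw [← h3]; ring
  calc S = ((Matrix.of u)ᵀ * (Matrix.of u)) * S := by
        rw [transpose_mul_row u horth, Matrix.one_mul]
    _ = (Matrix.of u)ᵀ * ((Matrix.of u) * S) := by rw [Matrix.mul_assoc]
    _ = (Matrix.of u)ᵀ * diagonal l * (Matrix.of u) := by rw [h1, Matrix.mul_assoc]

lemma quad_form (l : Fin p → ℝ) (u : Fin p → Fin p → ℝ) (w : Fin p → ℝ) :
    w ⬝ᵥ ((Matrix.of u)ᵀ * diagonal l * (Matrix.of u)).mulVec w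
      = ∑ j, l j * (u j ⬝ᵥ w) ^ 2 := by
  rw [← Matrix.mulVec_mulVec, ← Matrix.mulVec_mulVec]
  rw [Matrix.dotProduct_mulVec w (Matrix.of u)ᵀ]
  have h1 : Matrix.vecMul w (Matrix.of u)ᵀ = fun j => u j ⬝ᵥ w := by
    funext j
    simp [Matrix.vecMul, dotProduct, mul_comm]
  rw [h1]
  simp only [dotProduct, Matrix.mulVec_diagonal]
  refine Finset.sum_congr rfl fun j _ => ?_
  have h2 : (Matrix.of u).mulVec w j = u j ⬝ᵥ w := rfl
  rw [h2]
  simp only [dotProduct]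
  ring

end ET

/-- extension of a `Fin p` tuple to `ℕ` by zero. -/
noncomputable def ETB (p : ℕ) (b : Fin p → ℝ) (n : ℕ) : ℝ :=
  if h : n < p then b ⟨n, h⟩ else 0

namespace ET
variable {p : ℕ}

lemma ETB_delta_nonneg (b : Fin p → ℝ) (hb : ∀ i j : Fin p, i ≤ j → b j ≤ b i)
    (hb0 : ∀ i, 0 ≤ b i) (k : ℕ) : 0 ≤ ETB p b k - ETB p b (k+1) := by
  unfold ETB
  by_cases h1 : k + 1 < p
  · have h0 : k < p := Nat.lt_of_succ_lt h1
    rw [dif_pos h0, dif_pos h1]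
    have := hb ⟨k, h0⟩ ⟨k+1, h1⟩ (by simp [Fin.le_def])
    linarith
  · rw [dif_neg h1]
    split
    · simpa using hb0 _
    · simp

lemma ETB_tele (b : Fin p → ℝ) (i : Fin p) :
    b i = ∑ k ∈ Finset.range p,
      if (i:ℕ) ≤ k then (ETB p b k - ETB p b (k+1)) else 0 := by
  rw [Finset.sum_ite, Finset.sum_const_zero, add_zero]
  have hset : (Finset.range p).filter (fun k => (i:ℕ) ≤ k) = Finset.Ico (i:ℕ) p := by
    ext k; simp [Finset.mem_Ico, and_comm]
  rw [hset, Finset.sum_Ico_eq_sum_range]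
  have h := Finset.sum_range_sub' (f := fun k => ETB p b ((i:ℕ) + k)) (n := p - (i:ℕ))
  calc b i = ETB p b ((i:ℕ) + 0) - ETB p b ((i:ℕ) + (p - (i:ℕ))) := by
        rw [Nat.add_zero, Nat.add_sub_cancel' (le_of_lt i.isLt)]
        unfold ETB
        rw [dif_pos i.isLt, dif_neg (lt_irrefl p)]
        simp
    _ = ∑ k ∈ Finset.range (p - (i:ℕ)),
          (ETB p b ((i:ℕ) + k) - ETB p b ((i:ℕ) + (k+1))) := by
        rw [← h]
    _ = ∑ k ∈ Finset.range (p - (i:ℕ)),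
          (ETB p b ((i:ℕ) + k) - ETB p b ((i:ℕ) + k + 1)) := by
        refine Finset.sum_congr rfl fun k _ => ?_
        rw [Nat.add_assoc]

lemma ETB_expand (b : Fin p → ℝ) (F : Fin p → ℝ) :
    ∑ i, b i * F i = ∑ k ∈ Finset.range p, (ETB p b k - ETB p b (k+1)) *
      ∑ i ∈ Finset.univ.filter (fun i : Fin p => (i:ℕ) ≤ k), F i := by
  calc ∑ i, b i * F i
      = ∑ i : Fin p, (∑ k ∈ Finset.range p,
          if (i:ℕ) ≤ k then (ETB p b k - ETB p b (k+1)) else 0) * F i := by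
        refine Finset.sum_congr rfl fun i _ => ?_
        rw [← ETB_tele]
    _ = ∑ i : Fin p, ∑ k ∈ Finset.range p,
          (if (i:ℕ) ≤ k then (ETB p b k - ETB p b (k+1)) * F i else 0) := by
        refine Finset.sum_congr rfl fun i _ => ?_
        rw [Finset.sum_mul]
        refine Finset.sum_congr rfl fun k _ => ?_
        rw [ite_mul, zero_mul]
    _ = ∑ k ∈ Finset.range p, ∑ i : Fin p,
          (if (i:ℕ) ≤ k then (ETB p b k - ETB p b (k+1)) * F i else 0) :=
        Finset.sum_comm
    _ = ∑ k ∈ Finset.range p, (ETB p b k - ETB p b (k+1)) *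
          ∑ i ∈ Finset.univ.filter (fun i : Fin p => (i:ℕ) ≤ k), F i := by
        refine Finset.sum_congr rfl fun k _ => ?_
        rw [← Finset.sum_filter, Finset.mul_sum]

/-- doubly-stochastic rearrangement bound -/
lemma ds_bound (α : Fin p → Fin p → ℝ) (hα0 : ∀ j i, 0 ≤ α j i)
    (hrow : ∀ j, ∑ i, α j i = 1) (hcol : ∀ i, ∑ j, α j i = 1)
    (l a : Fin p → ℝ) (hl : ∀ i j : Fin p, i ≤ j → l j ≤ l i) (hl0 : ∀ i, 0 ≤ l i)
    (ha : ∀ i j : Fin p, i ≤ j → a j ≤ a i) (ha0 : ∀ i, 0 ≤ a i) :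
    ∑ i, a i * (∑ j, l j * α j i) ≤ ∑ i, a i * l i := by
  rw [ETB_expand a (fun i => ∑ j, l j * α j i), ETB_expand a l]
  refine Finset.sum_le_sum fun k hk => ?_
  refine mul_le_mul_of_nonneg_left ?_ (ETB_delta_nonneg a ha ha0 k)
  set Jk := Finset.univ.filter (fun i : Fin p => (i:ℕ) ≤ k) with hJk
  have hswap : ∑ i ∈ Jk, ∑ j, l j * α j i = ∑ j : Fin p, l j * ∑ i ∈ Jk, α j i := by
    rw [Finset.sum_comm]
    exact Finset.sum_congr rfl fun j _ => (Finset.mul_sum _ _ _).symm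
  have hRHS : ∑ i ∈ Jk, l i = ∑ j : Fin p, l j * (if (j:ℕ) ≤ k then 1 else 0) := by
    rw [Finset.sum_filter]
    exact Finset.sum_congr rfl fun j _ => by split <;> simp
  rw [hswap, hRHS, ETB_expand l (fun j => ∑ i ∈ Jk, α j i),
    ETB_expand l (fun j => if (j:ℕ) ≤ k then 1 else 0)]
  refine Finset.sum_le_sum fun m hm => ?_
  refine mul_le_mul_of_nonneg_left ?_ (ETB_delta_nonneg l hl hl0 m)
  set Jm := Finset.univ.filter (fun j : Fin p => (j:ℕ) ≤ m) with hJm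
  rcases le_total k m with hkm | hmk
  · have hfil : Jm.filter (fun j : Fin p => (j:ℕ) ≤ k) = Jk := by
      ext j
      simp only [hJk, hJm, Finset.mem_filter, Finset.mem_univ, true_and]
      exact ⟨fun h => h.2, fun h => ⟨le_trans h hkm, h⟩⟩
    have hRHS2 : ∑ j ∈ Jm, (if (j:ℕ) ≤ k then (1:ℝ) else 0) = (Jk.card : ℝ) := by
      rw [← Finset.sum_filter, hfil, Finset.sum_const, nsmul_eq_mul, mul_one]
    rw [hRHS2, Finset.sum_comm]
    calc ∑ i ∈ Jk, ∑ j ∈ Jm, α j i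
        ≤ ∑ i ∈ Jk, ∑ j : Fin p, α j i := by
          refine Finset.sum_le_sum fun i _ => ?_
          exact Finset.sum_le_sum_of_subset_of_nonneg (Finset.subset_univ _)
            (fun j _ _ => hα0 j i)
      _ = ∑ i ∈ Jk, (1:ℝ) := Finset.sum_congr rfl fun i _ => hcol i
      _ = (Jk.card : ℝ) := by rw [Finset.sum_const, nsmul_eq_mul, mul_one]
  · have hfil : Jm.filter (fun j : Fin p => (j:ℕ) ≤ k) = Jm := by
      ext j
      simp only [hJm, Finset.mem_filter, Finset.mem_univ, true_and]
      exact ⟨fun h => h.1, fun h => ⟨h, le_trans h hmk⟩⟩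
    have hRHS2 : ∑ j ∈ Jm, (if (j:ℕ) ≤ k then (1:ℝ) else 0) = (Jm.card : ℝ) := by
      rw [← Finset.sum_filter, hfil, Finset.sum_const, nsmul_eq_mul, mul_one]
    rw [hRHS2]
    calc ∑ j ∈ Jm, ∑ i ∈ Jk, α j i
        ≤ ∑ j ∈ Jm, ∑ i : Fin p, α j i := by
          refine Finset.sum_le_sum fun j _ => ?_
          exact Finset.sum_le_sum_of_subset_of_nonneg (Finset.subset_univ _)
            (fun i _ _ => hα0 j i)
      _ = ∑ j ∈ Jm, (1:ℝ) := Finset.sum_congr rfl fun j _ => hrow j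
      _ = (Jm.card : ℝ) := by rw [Finset.sum_const, nsmul_eq_mul, mul_one]

lemma psd_decomp (H : Matrix (Fin p) (Fin p) ℝ) (hH : H.PosSemidef) :
    ∃ ν : Fin p → ℝ, ∃ v : Fin p → Fin p → ℝ,
      (∀ i j, v i ⬝ᵥ v j = if i = j then 1 else 0) ∧
      (∀ i, 0 ≤ ν i) ∧
      H = (Matrix.of v)ᵀ * diagonal ν * (Matrix.of v) ∧
      Fintype.card {i // ν i ≠ 0} = H.rank := by
  have hA := hH.1
  set U : Matrix (Fin p) (Fin p) ℝ := (hA.eigenvectorUnitary : Matrix (Fin p) (Fin p) ℝ) with hU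
  have h1 : star U * U = 1 := by
    have := hA.eigenvectorUnitary.2
    rw [Unitary.mem_iff] at this
    exact this.1
  refine ⟨hA.eigenvalues, fun i j => U j i, ?_, fun i => hH.eigenvalues_nonneg i, ?_, ?_⟩
  · intro i j
    have := congrFun (congrFun h1 i) j
    simp only [Matrix.mul_apply, Matrix.star_apply, star_trivial, Matrix.one_apply] at this
    simpa [dotProduct] using this
  · have h2 : H = U * diagonal (RCLike.ofReal ∘ hA.eigenvalues) * star U :=
      hA.spectral_theorem
    have hst : star U = Matrix.of fun i j => U j i := by
      ext i j
      simp [Matrix.star_apply]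
    have hof : U = (Matrix.of fun i j => U j i)ᵀ := by
      ext i j; simp
    have hdiag : diagonal (RCLike.ofReal ∘ hA.eigenvalues) = diagonal hA.eigenvalues := by
      congr 1
    rw [hdiag, hst] at h2
    exact h2.trans (by rw [← hof])
  · exact (hA.rank_eq_card_non_zero_eigs).symm

lemma scalar_bound {s ν L : ℝ} (hs : 0 < s) (hν : 0 ≤ ν) (hL : 0 < L) :
    Real.log L + 1 - L / s ≤ Real.log (s + ν) - (s⁻¹ - (s+ν)⁻¹) * L := by
  have hsν : 0 < s + ν := by linarith
  have h := Real.log_le_sub_one_of_pos (show 0 < L / (s+ν) by positivity)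
  rw [Real.log_div (ne_of_gt hL) (ne_of_gt hsν)] at h
  have h2 : (s⁻¹ - (s+ν)⁻¹) * L = L / s - L / (s+ν) := by
    field_simp
  linarith

lemma shift_form (v : Fin p → Fin p → ℝ)
    (hv : ∀ i j, v i ⬝ᵥ v j = if i = j then 1 else 0) (c : Fin p → ℝ) (t : ℝ) :
    (Matrix.of v)ᵀ * diagonal (fun i => t + c i) * (Matrix.of v)
      = t • (1 : Matrix (Fin p) (Fin p) ℝ) + (Matrix.of v)ᵀ * diagonal c * (Matrix.of v) := by
  have h1 : diagonal (fun i : Fin p => t + c i)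
      = t • (1 : Matrix (Fin p) (Fin p) ℝ) + diagonal c := by
    rw [Matrix.smul_one_eq_diagonal, diagonal_add]
  rw [h1, Matrix.mul_add, Matrix.add_mul]
  congr 1
  rw [Matrix.mul_smul, Matrix.mul_one, Matrix.smul_mul, transpose_mul_row v hv]

lemma parseval (u w : Fin p → Fin p → ℝ)
    (hu : ∀ i j, u i ⬝ᵥ u j = if i = j then 1 else 0)
    (hw : ∀ i j, w i ⬝ᵥ w j = if i = j then 1 else 0) :
    (∀ j, ∑ i, (u j ⬝ᵥ w i)^2 = 1) ∧ (∀ i, ∑ j, (u j ⬝ᵥ w i)^2 = 1) := by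
  set C : Matrix (Fin p) (Fin p) ℝ := Matrix.of u * (Matrix.of w)ᵀ with hC
  have hCapp : ∀ j i, C j i = u j ⬝ᵥ w i := by
    intro j i
    simp [hC, Matrix.mul_apply, dotProduct]
  have h1 : C * Cᵀ = 1 := by
    rw [hC, Matrix.transpose_mul, Matrix.transpose_transpose, Matrix.mul_assoc,
      ← Matrix.mul_assoc (Matrix.of w)ᵀ, transpose_mul_row w hw, Matrix.one_mul,
      row_mul_transpose u hu]
  have h2 : Cᵀ * C = 1 := mul_eq_one_comm.mp h1
  constructor
  · intro j
    have := congrFun (congrFun h1 j) j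
    simp only [Matrix.mul_apply, Matrix.transpose_apply, Matrix.one_apply_eq] at this
    rw [← this]
    exact Finset.sum_congr rfl fun i _ => by rw [hCapp]; ring
  · intro i
    have := congrFun (congrFun h2 i) i
    simp only [Matrix.mul_apply, Matrix.transpose_apply, Matrix.one_apply_eq] at this
    rw [← this]
    exact Finset.sum_congr rfl fun j _ => by rw [hCapp]; ring

end ET

/-- Optimality of eigenvalue truncation for the rank-constrained factor model
(Tipping–Bishop): among all `Σ = σ² I + H` with `σ > 0` and `H` positive semidefinite
of rank at most `r`, the objective `log det Σ + tr(S Σ⁻¹)` is minimized by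
`Σ̂ = σ̂² I + ∑_{i≤r} (λ_i − σ̂²) u_i u_iᵀ` built from the eigendecomposition of `S`. -/
theorem eigen_truncation_optimal {p : ℕ} (r : ℕ) (hr1 : 1 ≤ r) (hrp : r < p)
    (S : Matrix (Fin p) (Fin p) ℝ) (hS : S.PosDef)
    (l : Fin p → ℝ) (u : Fin p → Fin p → ℝ)
    (hsort : ∀ i j : Fin p, i ≤ j → l j ≤ l i)
    (hpos : ∀ i, 0 < l i)
    (horth : ∀ i j, u i ⬝ᵥ u j = if i = j then 1 else 0)
    (heig : ∀ i, S.mulVec (u i) = l i • u i)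
    (σ2 : ℝ)
    (hσ2 : σ2 = (1 / ((p : ℝ) - r)) * ∑ i ∈ Finset.univ.filter (fun i : Fin p => r ≤ (i : ℕ)), l i)
    (Shat : Matrix (Fin p) (Fin p) ℝ)
    (hShat : Shat = σ2 • (1 : Matrix (Fin p) (Fin p) ℝ) +
        ∑ i ∈ Finset.univ.filter (fun i : Fin p => (i : ℕ) < r),
          (l i - σ2) • vecMulVec (u i) (u i)) :
    ∀ (σ : ℝ), 0 < σ → ∀ H : Matrix (Fin p) (Fin p) ℝ, H.PosSemidef → H.rank ≤ r →
      Real.log (Shat.det) + (S * Shat⁻¹).trace ≤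
        Real.log ((σ ^ 2 • (1 : Matrix (Fin p) (Fin p) ℝ) + H).det)
          + (S * (σ ^ 2 • (1 : Matrix (Fin p) (Fin p) ℝ) + H)⁻¹).trace := by
  intro σ hσ H hH hrank
  have hs : 0 < σ ^ 2 := by positivity
  have hSsym : Sᵀ = S := by
    ext i j
    have := congrFun (congrFun hS.1 i) j
    simpa using this
  have hSeq : S = (Matrix.of u)ᵀ * diagonal l * (Matrix.of u) :=
    ET.S_eq S hSsym l u horth heig
  have hpr : (0:ℝ) < (p:ℝ) - r := sub_pos.mpr (Nat.cast_lt.mpr hrp)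
  have hσ2pos : 0 < σ2 := by
    rw [hσ2]
    refine mul_pos (by positivity) ?_
    refine Finset.sum_pos (fun i _ => hpos i) ⟨⟨r, hrp⟩, ?_⟩
    simp
  have hsum_ge : ∑ i ∈ Finset.univ.filter (fun i : Fin p => r ≤ (i:ℕ)), l i
      = ((p:ℝ) - r) * σ2 := by
    rw [hσ2]
    field_simp
  have hfilter_not : Finset.univ.filter (fun i : Fin p => ¬ (i:ℕ) < r)
      = Finset.univ.filter (fun i : Fin p => r ≤ (i:ℕ)) := by
    ext i; simp [not_lt]
  have hcard_lt : (Finset.univ.filter (fun i : Fin p => (i:ℕ) < r)).card = r := by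
    have h : Finset.univ.filter (fun i : Fin p => (i:ℕ) < r)
        = Finset.Iio (⟨r, hrp⟩ : Fin p) := by
      ext i; simp [Fin.lt_def]
    rw [h, Fin.card_Iio]
  have hcard_ge : (Finset.univ.filter (fun i : Fin p => r ≤ (i:ℕ))).card = p - r := by
    have h : Finset.univ.filter (fun i : Fin p => r ≤ (i:ℕ))
        = Finset.Ici (⟨r, hrp⟩ : Fin p) := by
      ext i; simp [Fin.le_def]
    rw [h, Fin.card_Ici]
  have hcard_ge' : ((Finset.univ.filter (fun i : Fin p => r ≤ (i:ℕ))).card : ℝ)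
      = (p:ℝ) - r := by
    rw [hcard_ge, Nat.cast_sub (le_of_lt hrp)]
  have hul : ∀ i, u i ⬝ᵥ S.mulVec (u i) = l i := by
    intro i
    rw [heig i, dotProduct_smul, horth i i]
    simp
  -- ## Part 1 : value at Shat
  set dhat : Fin p → ℝ := fun i => if (i:ℕ) < r then l i else σ2 with hdhat
  have hdhat_pos : ∀ i, 0 < dhat i := by
    intro i; rw [hdhat]; dsimp only; split
    · exact hpos i
    · exact hσ2pos
  have hShat_eq : Shat = (Matrix.of u)ᵀ * diagonal dhat * (Matrix.of u) := by
    have hsplit : diagonal dhat = σ2 • (1 : Matrix (Fin p) (Fin p) ℝ)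
        + diagonal (fun i : Fin p => if (i:ℕ) < r then l i - σ2 else 0) := by
      have harg : dhat = fun i : Fin p => σ2 + if (i:ℕ) < r then l i - σ2 else 0 := by
        funext i
        simp only [hdhat]
        split <;> ring
      rw [Matrix.smul_one_eq_diagonal, diagonal_add, harg]
    rw [hShat]
    symm
    rw [hsplit, Matrix.mul_add, Matrix.add_mul]
    congr 1
    · rw [Matrix.mul_smul, Matrix.mul_one, Matrix.smul_mul, ET.transpose_mul_row u horth]
    · rw [ET.sum_form, Finset.sum_filter]
      exact Finset.sum_congr rfl fun i _ => by split <;> simp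
  have hlogdet_Shat : Real.log Shat.det
      = (∑ i ∈ Finset.univ.filter (fun i : Fin p => (i:ℕ) < r), Real.log (l i))
        + ((p:ℝ) - r) * Real.log σ2 := by
    rw [hShat_eq, ET.det_form u horth,
      Real.log_prod (fun i _ => ne_of_gt (hdhat_pos i))]
    have h1 : ∀ i : Fin p, Real.log (dhat i)
        = if (i:ℕ) < r then Real.log (l i) else Real.log σ2 := by
      intro i; rw [hdhat]; dsimp only; split <;> rfl
    rw [Finset.sum_congr rfl fun i _ => h1 i, Finset.sum_ite, Finset.sum_const,
      hfilter_not, nsmul_eq_mul, hcard_ge']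
  have htrace_Shat : (S * Shat⁻¹).trace = (p:ℝ) := by
    rw [hShat_eq, ET.inv_form u horth dhat (fun i => ne_of_gt (hdhat_pos i)), ET.trace_form]
    have h1 : ∀ i : Fin p, (dhat i)⁻¹ * (u i ⬝ᵥ S.mulVec (u i))
        = if (i:ℕ) < r then 1 else σ2⁻¹ * l i := by
      intro i
      rw [hul i, hdhat]; dsimp only
      split
      · exact inv_mul_cancel₀ (ne_of_gt (hpos i))
      · rfl
    rw [Finset.sum_congr rfl fun i _ => h1 i, Finset.sum_ite, Finset.sum_const,
      hfilter_not, ← Finset.mul_sum, hsum_ge, hcard_lt, nsmul_eq_mul, mul_one]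
    have h2 : σ2⁻¹ * (((p:ℝ) - r) * σ2) = (p:ℝ) - r := by
      field_simp
    rw [h2]
    ring
  -- ## Part 2 : decompose Σ
  obtain ⟨ν₀, v₀, hv₀, hν₀, hHdec, hcardH⟩ := ET.psd_decomp H hH
  set e : Equiv.Perm (Fin p) := (Fin.revPerm).trans (Tuple.sort ν₀) with he
  set ν : Fin p → ℝ := fun i => ν₀ (e i) with hν
  set w : Fin p → Fin p → ℝ := fun i => v₀ (e i) with hw
  have hνsort : ∀ i j : Fin p, i ≤ j → ν j ≤ ν i := by
    intro i j hij
    have : (Fin.rev j) ≤ (Fin.rev i) := Fin.rev_le_rev.mpr hij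
    have h2 := Tuple.monotone_sort ν₀ this
    simpa [hν, he, Equiv.trans_apply] using h2
  have hν0 : ∀ i, 0 ≤ ν i := fun i => hν₀ (e i)
  have hworth : ∀ i j, w i ⬝ᵥ w j = if i = j then 1 else 0 := by
    intro i j
    rw [hw]; dsimp only
    rw [hv₀ (e i) (e j)]
    simp [e.injective.eq_iff]
  have hνzero : ∀ i : Fin p, r ≤ (i:ℕ) → ν i = 0 := by
    intro i hi
    by_contra hne
    have hipos : 0 < ν i := lt_of_le_of_ne (hν0 i) (Ne.symm hne)
    have hsub : Finset.Iic i ⊆ Finset.univ.filter (fun j => ν j ≠ 0) := by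
      intro j hj
      simp only [Finset.mem_Iic] at hj
      simp only [Finset.mem_filter, Finset.mem_univ, true_and]
      exact ne_of_gt (lt_of_lt_of_le hipos (hνsort j i hj))
    have h1 : (i:ℕ) + 1 ≤ (Finset.univ.filter (fun j => ν j ≠ 0)).card := by
      calc (i:ℕ) + 1 = (Finset.Iic i).card := (Fin.card_Iic i).symm
        _ ≤ _ := Finset.card_le_card hsub
    have h2 : (Finset.univ.filter (fun j => ν j ≠ 0)).card
        = Fintype.card {j // ν j ≠ 0} := (Fintype.card_subtype _).symm
    have h3 : Fintype.card {j // ν j ≠ 0} = Fintype.card {j // ν₀ j ≠ 0} :=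
      Fintype.card_congr (e.subtypeEquiv (fun b => by rw [hν]))
    have h4 : (i:ℕ) + 1 ≤ r := by
      rw [h2, h3, hcardH] at h1
      omega
    omega
  have hHdec' : H = (Matrix.of w)ᵀ * diagonal ν * (Matrix.of w) := by
    calc H = (Matrix.of v₀)ᵀ * diagonal ν₀ * (Matrix.of v₀) := hHdec
      _ = ∑ i, ν₀ i • vecMulVec (v₀ i) (v₀ i) := ET.sum_form v₀ ν₀
      _ = ∑ i, ν i • vecMulVec (w i) (w i) :=
          (Equiv.sum_comp e (fun i => ν₀ i • vecMulVec (v₀ i) (v₀ i))).symm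
      _ = (Matrix.of w)ᵀ * diagonal ν * (Matrix.of w) := (ET.sum_form w ν).symm
  have hSig : σ ^ 2 • (1 : Matrix (Fin p) (Fin p) ℝ) + H
      = (Matrix.of w)ᵀ * diagonal (fun i => σ ^ 2 + ν i) * (Matrix.of w) := by
    rw [ET.shift_form w hworth ν (σ ^ 2), hHdec']
  have hdpos : ∀ i, 0 < σ ^ 2 + ν i := fun i => by have := hν0 i; positivity
  have hlogdet_Sig : Real.log ((σ ^ 2 • (1 : Matrix (Fin p) (Fin p) ℝ) + H).det)
      = ∑ i, Real.log (σ ^ 2 + ν i) := by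
    rw [hSig, ET.det_form w hworth]
    exact Real.log_prod fun i _ => ne_of_gt (hdpos i)
  set q : Fin p → ℝ := fun i => w i ⬝ᵥ S.mulVec (w i) with hq
  have htrace_Sig : (S * (σ ^ 2 • (1 : Matrix (Fin p) (Fin p) ℝ) + H)⁻¹).trace
      = ∑ i, (σ ^ 2 + ν i)⁻¹ * q i := by
    rw [hSig, ET.inv_form w hworth _ (fun i => ne_of_gt (hdpos i)), ET.trace_form]
  -- ## Part 3 : the trace inequality
  set α : Fin p → Fin p → ℝ := fun j i => (u j ⬝ᵥ w i) ^ 2 with hα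
  have hα0 : ∀ j i, 0 ≤ α j i := fun j i => sq_nonneg _
  obtain ⟨hrow, hcol⟩ := ET.parseval u w horth hworth
  have hq_expand : ∀ i, q i = ∑ j, l j * α j i := by
    intro i
    rw [hq]; dsimp only
    rw [hSeq, ET.quad_form]
  set a : Fin p → ℝ := fun i => (σ ^ 2)⁻¹ - (σ ^ 2 + ν i)⁻¹ with ha
  have ha0 : ∀ i, 0 ≤ a i := by
    intro i
    rw [ha]; dsimp only
    have h1 : σ ^ 2 ≤ σ ^ 2 + ν i := by linarith [hν0 i]
    have := one_div_le_one_div_of_le hs h1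
    simp only [one_div] at this
    linarith
  have haanti : ∀ i j : Fin p, i ≤ j → a j ≤ a i := by
    intro i j hij
    rw [ha]; dsimp only
    have h1 : σ ^ 2 + ν j ≤ σ ^ 2 + ν i := by linarith [hνsort i j hij]
    have := one_div_le_one_div_of_le (hdpos j) h1
    simp only [one_div] at this
    linarith
  have hsumq : ∑ i, q i = ∑ i, l i := by
    rw [Finset.sum_congr rfl fun i _ => hq_expand i, Finset.sum_comm]
    refine Finset.sum_congr rfl fun j _ => ?_
    rw [← Finset.mul_sum, hrow j, mul_one]
  have hds : ∑ i, a i * q i ≤ ∑ i, a i * l i := by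
    have h1 : ∑ i, a i * q i = ∑ i, a i * (∑ j, l j * α j i) :=
      Finset.sum_congr rfl fun i _ => by rw [hq_expand i]
    rw [h1]
    exact ET.ds_bound α hα0 hrow hcol l a hsort (fun i => le_of_lt (hpos i)) haanti ha0
  have htrace_ge : ∑ i, (σ ^ 2 + ν i)⁻¹ * q i
      ≥ (σ ^ 2)⁻¹ * (∑ i, l i) - ∑ i, a i * l i := by
    have h1 : ∑ i, (σ ^ 2 + ν i)⁻¹ * q i
        = (σ ^ 2)⁻¹ * (∑ i, q i) - ∑ i, a i * q i := by
      rw [Finset.mul_sum, ← Finset.sum_sub_distrib]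
      refine Finset.sum_congr rfl fun i _ => ?_
      rw [ha]; dsimp only; ring
    rw [h1, hsumq]
    linarith [hds]
  -- ## Part 4 : per-index scalar bounds
  have hper : ∀ i : Fin p,
      (if (i:ℕ) < r then Real.log (l i) + 1 - l i / σ ^ 2 else Real.log (σ ^ 2))
        ≤ Real.log (σ ^ 2 + ν i) - a i * l i := by
    intro i
    by_cases hi : (i:ℕ) < r
    · rw [if_pos hi, ha]; dsimp only
      have := ET.scalar_bound hs (hν0 i) (hpos i)
      linarith
    · rw [if_neg hi]
      have hz : ν i = 0 := hνzero i (not_lt.mp hi)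
      rw [ha]; dsimp only
      rw [hz, add_zero]
      simp
  -- ## Part 5 : assemble
  have hsum_split_l : ∑ i, l i
      = ∑ i ∈ Finset.univ.filter (fun i : Fin p => (i:ℕ) < r), l i + ((p:ℝ) - r) * σ2 := by
    rw [← Finset.sum_filter_add_sum_filter_not Finset.univ (fun i : Fin p => (i:ℕ) < r) l,
      hfilter_not, hsum_ge]
  have hancil : (σ ^ 2)⁻¹ * (∑ i, l i)
      = (σ ^ 2)⁻¹ * (∑ i ∈ Finset.univ.filter (fun i : Fin p => (i:ℕ) < r), l i)
        + (σ ^ 2)⁻¹ * (((p:ℝ) - r) * σ2) := by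
    rw [hsum_split_l]; ring
  have hper_sum : ∑ i ∈ Finset.univ.filter (fun i : Fin p => (i:ℕ) < r),
        (Real.log (l i) + 1 - l i / σ ^ 2) + ((p:ℝ) - r) * Real.log (σ ^ 2)
      ≤ ∑ i, (Real.log (σ ^ 2 + ν i) - a i * l i) := by
    have h1 := Finset.sum_le_sum (fun i (_ : i ∈ Finset.univ) => hper i)
    rw [Finset.sum_ite, Finset.sum_const, hfilter_not, nsmul_eq_mul, hcard_ge'] at h1
    exact h1
  have hsplit2 : ∑ i ∈ Finset.univ.filter (fun i : Fin p => (i:ℕ) < r),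
        (Real.log (l i) + 1 - l i / σ ^ 2)
      = ∑ i ∈ Finset.univ.filter (fun i : Fin p => (i:ℕ) < r), Real.log (l i) + (r:ℝ)
        - (σ ^ 2)⁻¹ * ∑ i ∈ Finset.univ.filter (fun i : Fin p => (i:ℕ) < r), l i := by
    rw [Finset.sum_sub_distrib, Finset.sum_add_distrib, Finset.sum_const, hcard_lt,
      nsmul_eq_mul, mul_one, ← Finset.sum_div, div_eq_inv_mul]
  have hsplit3 : ∑ i, (Real.log (σ ^ 2 + ν i) - a i * l i)
      = ∑ i, Real.log (σ ^ 2 + ν i) - ∑ i, a i * l i := Finset.sum_sub_distrib _ _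
  have hfinal : ((p:ℝ) - r) * Real.log σ2 + ((p:ℝ) - r)
      ≤ ((p:ℝ) - r) * Real.log (σ ^ 2) + (σ ^ 2)⁻¹ * (((p:ℝ) - r) * σ2) := by
    have h0 : Real.log σ2 - Real.log (σ ^ 2) ≤ σ2 * (σ ^ 2)⁻¹ - 1 := by
      have h := Real.log_le_sub_one_of_pos (show 0 < σ2 / σ ^ 2 by positivity)
      rw [Real.log_div (ne_of_gt hσ2pos) (ne_of_gt hs), div_eq_mul_inv] at h
      linarith
    have h1 := mul_le_mul_of_nonneg_left h0 hpr.le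
    have e1 : ((p:ℝ) - r) * (Real.log σ2 - Real.log (σ ^ 2))
        = ((p:ℝ) - r) * Real.log σ2 - ((p:ℝ) - r) * Real.log (σ ^ 2) := by ring
    have e2 : ((p:ℝ) - r) * (σ2 * (σ ^ 2)⁻¹ - 1)
        = (σ ^ 2)⁻¹ * (((p:ℝ) - r) * σ2) - ((p:ℝ) - r) := by ring
    linarith
  have hp : (p:ℝ) = (r:ℝ) + ((p:ℝ) - (r:ℝ)) := by ring
  rw [hlogdet_Shat, htrace_Shat, hlogdet_Sig, htrace_Sig]
  linarith [htrace_ge, hper_sum, hsplit2, hsplit3, hancil, hfinal, hp]
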